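/- Let R > 0, let ε_rr : [0, R] → ℝ be continuously differentiable and ε_θθ : [0, R] → ℝ be continuous. Suppose ∫₀^R [ r ε_rr(r) U'(r) + ε_θθ(r) U(r) ] dr = 0 for every continuously differentiable U : [0, R] → ℝ with U(0) = 0. Then ε_rr(R) = 0 and ε_θθ(r) = d/dr [ r ε_rr(r) ] for all r ∈ (0, R). -/

import Mathlib

/-!
Let `F` be the primitive of `-ε_θθ` vanishing at `R` and `K = r ε_rr + F`. Integrating by parts,
`∫ ε_θθ U = ∫ F U'` whenever `U(0) = 0`, so the orthogonality relation reads `∫ K U' = 0`.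
Testing it with the primitive `U` of `K` itself gives `∫ K² = 0`, hence `K ≡ 0` on `[0, R]`:
at `r = R` this is `R ε_rr(R) = 0`, and differentiating
`r ε_rr = -F` gives `ε_θθ = (r ε_rr)'`.
-/

open Set Topology MeasureTheory intervalIntegral

theorem ContinuousOn.exists_hasDerivAt_Icc {E : Type*} [NormedAddCommGroup E] [NormedSpace ℝ E]
    [CompleteSpace E] {f : ℝ → E} {a b : ℝ} (hab : a ≤ b) (hf : ContinuousOn f (Icc a b))
    (c : ℝ) : ∃ F : ℝ → E, F c = 0 ∧ ∀ x ∈ Icc a b, HasDerivAt F (f x) x := by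
  set g := IccExtend hab ((Icc a b).domRestrict f)
  have hg : Continuous g := hf.domRestrict.Icc_extend'
  refine ⟨fun x => ∫ t in c..x, g t, integral_same, fun x hx => ?_⟩
  have hgx : g x = f x := IccExtend_of_mem hab _ hx
  simpa only [hgx] using (hg.integral_hasStrictDerivAt c x).hasDerivAt

theorem ContinuousOn.eqOn_zero_of_integral_eq_zero_of_nonneg {g : ℝ → ℝ} {a b : ℝ}
    (hab : a < b) (hg : ContinuousOn g (Icc a b)) (hg₀ : ∀ x ∈ Icc a b, 0 ≤ g x)
    (hint : ∫ x in a..b, g x = 0) : EqOn g 0 (Icc a b) := by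
  have hgi : IntervalIntegrable g volume a b := hg.intervalIntegrable_of_Icc hab.le
  have hg₀' : 0 ≤ᵐ[volume.restrict (Ioc a b)] g :=
    (ae_restrict_iff' measurableSet_Ioc).2 <|
      .of_forall fun x hx => hg₀ x (Ioc_subset_Icc_self hx)
  have hae : g =ᵐ[volume.restrict (Icc a b)] 0 := by
    rw [← Measure.restrict_congr_set Ioc_ae_eq_Icc]
    exact (integral_eq_zero_iff_of_le_of_nonneg_ae hab.le hg₀' hgi).1 hint
  refine Measure.eqOn_of_ae_eq hae hg continuousOn_const ?_
  rw [interior_Icc, closure_Ioo hab.ne]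

theorem integral_mul_deriv_add_mul_eq_integral_add_mul_deriv {g θ F U U' : ℝ → ℝ} {a b : ℝ}
    (hab : a ≤ b) (hg : ContinuousOn g (Icc a b)) (hθ : ContinuousOn θ (Icc a b))
    (hU' : ContinuousOn U' (Icc a b))
    (hF : ∀ x ∈ Icc a b, HasDerivAt F (-θ x) x) (hU : ∀ x ∈ Icc a b, HasDerivAt U (U' x) x)
    (hFb : F b = 0) (hUa : U a = 0) :
    ∫ x in a..b, (g x * U' x + θ x * U x) = ∫ x in a..b, (g x + F x) * U' x := by
  rw [← uIcc_of_le hab] at hg hθ hU' hF hU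
  have hFc : ContinuousOn F (uIcc a b) := HasDerivAt.continuousOn hF
  have hUc : ContinuousOn U (uIcc a b) := HasDerivAt.continuousOn hU
  have hparts : ∫ x in a..b, θ x * U x = ∫ x in a..b, F x * U' x := by
    rw [integral_mul_deriv_eq_deriv_mul hF hU hθ.neg.intervalIntegrable hU'.intervalIntegrable,
      hFb, hUa]
    simp only [neg_mul, intervalIntegral.integral_neg]
    ring
  have hgU : IntervalIntegrable (fun x => g x * U' x) volume a b := (hg.mul hU').intervalIntegrable
  have hθU : IntervalIntegrable (fun x => θ x * U x) volume a b :=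
    (hθ.mul hUc).intervalIntegrable
  have hFU : IntervalIntegrable (fun x => F x * U' x) volume a b := (hFc.mul hU').intervalIntegrable
  simp only [add_mul]
  rw [integral_add hgU hθU, integral_add hgU hFU, hparts]

theorem axisymmetric_conditions_of_orthogonal_general (R : ℝ) (hR : 0 < R)
    (εrr εrr' εθθ : ℝ → ℝ)
    (hεd : ∀ r ∈ Set.Icc (0 : ℝ) R, HasDerivAt εrr (εrr' r) r)
    (hθc : ContinuousOn εθθ (Set.Icc 0 R))
    (horth : ∀ U U' : ℝ → ℝ, (∀ r ∈ Set.Icc (0 : ℝ) R, HasDerivAt U (U' r) r) →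
      ContinuousOn U' (Set.Icc 0 R) → U 0 = 0 →
      ∫ r in (0 : ℝ)..R, (r * εrr r * U' r + εθθ r * U r) = 0) :
    εrr R = 0 ∧ ∀ r ∈ Set.Ioo (0 : ℝ) R, εθθ r = εrr r + r * εrr' r := by
  obtain ⟨F, hFR, hF⟩ := hθc.neg.exists_hasDerivAt_Icc hR.le R
  set K : ℝ → ℝ := fun r => r * εrr r + F r with hK
  have hrε : ContinuousOn (fun r => r * εrr r) (Icc 0 R) :=
    continuousOn_id.mul (HasDerivAt.continuousOn hεd)
  have hKc : ContinuousOn K (Icc 0 R) := hrε.add (HasDerivAt.continuousOn hF)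
  obtain ⟨U, hU0, hU⟩ := hKc.exists_hasDerivAt_Icc hR.le 0
  have hKsq : ∫ r in (0 : ℝ)..R, K r * K r = 0 := by
    have h := horth U K hU hKc hU0
    rwa [integral_mul_deriv_add_mul_eq_integral_add_mul_deriv hR.le hrε hθc hKc hF hU hFR hU0]
      at h
  have hK0 : ∀ r ∈ Icc 0 R, K r = 0 := fun r hr => mul_self_eq_zero.1 <|
    (hKc.mul hKc).eqOn_zero_of_integral_eq_zero_of_nonneg hR
      (fun x _ => mul_self_nonneg (K x)) hKsq hr
  refine ⟨?_, fun r hr => ?_⟩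
  · have hKR := hK0 R (right_mem_Icc.2 hR.le)
    simpa only [hK, hFR, add_zero, mul_eq_zero, hR.ne', false_or] using hKR
  · have hr' : r ∈ Icc 0 R := Ioo_subset_Icc_self hr
    have hev : (fun x => -F x) =ᶠ[𝓝 r] fun x => x * εrr x := by
      filter_upwards [Ioo_mem_nhds hr.1 hr.2] with x hx
      linarith [hK0 x (Ioo_subset_Icc_self hx)]
    have hθ : HasDerivAt (fun x => -F x) (εθθ r) r := by
      simpa only [Pi.neg_apply, neg_neg] using (hF r hr').fun_neg
    have hd : HasDerivAt (fun x => x * εrr x) (εrr r + r * εrr' r) r := by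
      simpa only [one_mul] using (hasDerivAt_id' r).fun_mul (hεd r hr')
    exact (hθ.congr_of_eventuallyEq hev.symm).unique hd

/-- Necessity of the null-complement conditions in the axisymmetric setting: if
`∫₀^R (r ε_rr U' + ε_θθ U) dr = 0` for every `C¹` function `U` on `[0, R]` with `U(0) = 0`,
then `ε_rr(R) = 0` and `ε_θθ = d/dr (r ε_rr) = ε_rr + r ε_rr'` on `(0, R)`. -/
theorem axisymmetric_conditions_of_orthogonal (R : ℝ) (hR : 0 < R)
    (εrr εrr' εθθ : ℝ → ℝ)
    (hεd : ∀ r ∈ Set.Icc (0 : ℝ) R, HasDerivAt εrr (εrr' r) r)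
    (hεc : ContinuousOn εrr' (Set.Icc 0 R))
    (hθc : ContinuousOn εθθ (Set.Icc 0 R))
    (horth : ∀ U U' : ℝ → ℝ, (∀ r ∈ Set.Icc (0 : ℝ) R, HasDerivAt U (U' r) r) →
      ContinuousOn U' (Set.Icc 0 R) → U 0 = 0 →
      ∫ r in (0 : ℝ)..R, (r * εrr r * U' r + εθθ r * U r) = 0) :
    εrr R = 0 ∧ ∀ r ∈ Set.Ioo (0 : ℝ) R, εθθ r = εrr r + r * εrr' r :=
  axisymmetric_conditions_of_orthogonal_general R hR εrr εrr' εθθ hεd hθc horth
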